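/- (Uncoded transmission does not benefit from collective measurement: converse part) Let γ ∈ [0,1] and n ≥ 1. Set ρ_0 = ρ₊ and ρ_1 = ρ₋, and for each x ∈ {0,1}^n let σ_x be the matrix indexed by {0,1}^n × {0,1}^n with entries σ_x(u, v) = ∏_{j=1}^n (N_γ(ρ_{x_j}))(u_j, v_j). Then for every POVM (Λ_x)_{x ∈ {0,1}^n} on ℂ^{2^n} (positive semidefinite matrices indexed by {0,1}^n summing to the identity), 2^{−n} · Σ_{x ∈ {0,1}^n} Re Tr(Λ_x σ_x) ≤ ((1 + √(1−γ))/2)^n. -/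

import Mathlib

open Matrix Complex
open scoped ComplexOrder

/-- Kraus operator `K₀` of the qubit amplitude damping channel. -/
noncomputable def K₀ (γ : ℝ) : Matrix (Fin 2) (Fin 2) ℂ :=
  !![1, 0; 0, (Real.sqrt (1 - γ) : ℂ)]

/-- Kraus operator `K₁` of the qubit amplitude damping channel. -/
noncomputable def K₁ (γ : ℝ) : Matrix (Fin 2) (Fin 2) ℂ :=
  !![0, (Real.sqrt γ : ℂ); 0, 0]

/-- The qubit amplitude damping channel with damping parameter `γ`. -/
noncomputable def ADC (γ : ℝ) (ρ : Matrix (Fin 2) (Fin 2) ℂ) : Matrix (Fin 2) (Fin 2) ℂ :=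
  K₀ γ * ρ * (K₀ γ)ᴴ + K₁ γ * ρ * (K₁ γ)ᴴ

/-- The state `ρ₊ = |+⟩⟨+|`. -/
noncomputable def ρPlus : Matrix (Fin 2) (Fin 2) ℂ := (1/2 : ℂ) • !![1, 1; 1, 1]

/-- The state `ρ₋ = |−⟩⟨−|`. -/
noncomputable def ρMinus : Matrix (Fin 2) (Fin 2) ℂ := (1/2 : ℂ) • !![1, -1; -1, 1]

/-- The encoding `0 ↦ ρ₊`, `1 ↦ ρ₋`. -/
noncomputable def ρbit (i : Fin 2) : Matrix (Fin 2) (Fin 2) ℂ :=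
  if i = 0 then ρPlus else ρMinus

/-- The tensor-product channel output `N_γ(ρ_{x₁}) ⊗ ⋯ ⊗ N_γ(ρ_{xₙ})` for the uncoded word
`x ∈ {0,1}ⁿ`, realized as a matrix indexed by `{0,1}ⁿ` with entrywise products. -/
noncomputable def σout (γ : ℝ) (n : ℕ) (x : Fin n → Fin 2) :
    Matrix (Fin n → Fin 2) (Fin n → Fin 2) ℂ :=
  Matrix.of fun u v => ∏ j, (ADC γ (ρbit (x j))) (u j) (v j)

/-- The tensor-product measurement operator `ρ_{x₁} ⊗ ⋯ ⊗ ρ_{xₙ}` (individual optimal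
single-use measurements). -/
noncomputable def Pind (n : ℕ) (x : Fin n → Fin 2) :
    Matrix (Fin n → Fin 2) (Fin n → Fin 2) ℂ :=
  Matrix.of fun u v => ∏ j, (ρbit (x j)) (u j) (v j)

open scoped MatrixOrder

/-! The single-use outputs are dominated, in the Loewner order, by the single operator
`E = N_γ(ρ₊) + √(1−γ) ρ₋ = N_γ(ρ₋) + √(1−γ) ρ₊` of trace `1 + √(1−γ)`; the two expressions agree
because `N_γ` scales the coherence `ρ₊ − ρ₋` by `√(1−γ)`. Tensor products of positive matrices are
monotone, so `σ_x ≤ E^{⊗n}` for every `x`, and for a POVM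
`∑ₓ Tr(Λₓ σₓ) ≤ ∑ₓ Tr(Λₓ E^{⊗n}) = Tr E^{⊗n} = (1 + √(1−γ))ⁿ`. -/

section piKronecker

variable {ι α R : Type*} [Fintype ι]

def piKronecker [CommMonoid R] (m : ι → Matrix α α R) : Matrix (ι → α) (ι → α) R :=
  of fun u v => ∏ j, m j (u j) (v j)

lemma piKronecker_mul [DecidableEq ι] [Fintype α] [CommSemiring R] (m m' : ι → Matrix α α R) :
    piKronecker m * piKronecker m' = piKronecker fun j => m j * m' j := by
  ext u v
  simp only [piKronecker, mul_apply, of_apply, Finset.prod_mul_distrib.symm]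
  exact (Fintype.prod_sum fun j k => m j (u j) k * m' j k (v j)).symm

lemma piKronecker_conjTranspose [CommSemiring R] [StarRing R] (m : ι → Matrix α α R) :
    (piKronecker m)ᴴ = piKronecker fun j => (m j)ᴴ := by
  ext u v
  simp [piKronecker, conjTranspose_apply, star_prod]

lemma trace_piKronecker [DecidableEq ι] [Fintype α] [CommSemiring R] (m : ι → Matrix α α R) :
    (piKronecker m).trace = ∏ j, (m j).trace :=
  (Fintype.prod_sum fun j k => m j k k).symm

lemma piKronecker_add [DecidableEq ι] [CommSemiring R] (m m' : ι → Matrix α α R) :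
    piKronecker (m + m') = ∑ t : Finset ι, piKronecker fun j => if j ∈ t then m j else m' j := by
  ext u v
  simp only [piKronecker, Pi.add_apply, Matrix.add_apply, of_apply, Matrix.sum_apply,
    Fintype.prod_add]
  refine Fintype.sum_congr _ _ fun t => ?_
  rw [← Finset.prod_mul_prod_compl t]
  congr 1 <;> refine Finset.prod_congr rfl fun j hj => ?_ <;> simp_all [Finset.mem_compl]

variable {𝕜 : Type*} [RCLike 𝕜] [DecidableEq ι] [Fintype α] [DecidableEq α]

lemma piKronecker_nonneg {m : ι → Matrix α α 𝕜} (hm : ∀ j, 0 ≤ m j) : 0 ≤ piKronecker m := by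
  choose b hb using fun j => CStarAlgebra.nonneg_iff_eq_star_mul_self.mp (hm j)
  have hm_eq : piKronecker m = star (piKronecker b) * piKronecker b := by
    rw [star_eq_conjTranspose, piKronecker_conjTranspose, piKronecker_mul, funext hb]
    rfl
  rw [hm_eq]
  exact star_mul_self_nonneg _

lemma piKronecker_mono {m m' : ι → Matrix α α 𝕜} (hm : ∀ j, 0 ≤ m j)
    (hmm' : ∀ j, m j ≤ m' j) : piKronecker m ≤ piKronecker m' := by
  -- Expand `m' = (m' - m) + m` multilinearly: every term is positive and the `t = ∅` term is
  -- `piKronecker m`.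
  rw [← sub_add_cancel m' m, piKronecker_add]
  calc piKronecker m = piKronecker fun j => if j ∈ (∅ : Finset ι) then (m' - m) j else m j := by
        simp
    _ ≤ _ := by
      refine Finset.single_le_sum (f := fun t : Finset ι => piKronecker fun j =>
        if j ∈ t then (m' - m) j else m j) (fun t _ => piKronecker_nonneg fun j => ?_)
        (Finset.mem_univ _)
      split_ifs
      exacts [sub_nonneg.mpr (hmm' j), hm j]

end piKronecker

section Trace

variable {n X 𝕜 : Type*} [RCLike 𝕜] [Fintype n] [DecidableEq n]

lemma trace_mul_nonneg {A B : Matrix n n 𝕜} (hA : 0 ≤ A) (hB : 0 ≤ B) : 0 ≤ (A * B).trace := by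
  obtain ⟨C, rfl⟩ := CStarAlgebra.nonneg_iff_eq_star_mul_self.mp hB
  rw [star_eq_conjTranspose, ← Matrix.mul_assoc, trace_mul_cycle]
  exact (hA.posSemidef.mul_mul_conjTranspose_same C).trace_nonneg

lemma trace_mul_le_trace_mul {A B C : Matrix n n 𝕜} (hA : 0 ≤ A) (hBC : B ≤ C) :
    (A * B).trace ≤ (A * C).trace := by
  have h := trace_mul_nonneg hA (sub_nonneg.mpr hBC)
  rwa [Matrix.mul_sub, trace_sub, sub_nonneg] at h

lemma sum_trace_mul_le_trace_of_le [Fintype X] {Λ σ : X → Matrix n n 𝕜} {D : Matrix n n 𝕜}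
    (hΛ : ∀ x, 0 ≤ Λ x) (hΛsum : ∑ x, Λ x = 1) (hσD : ∀ x, σ x ≤ D) :
    ∑ x, (Λ x * σ x).trace ≤ D.trace :=
  calc ∑ x, (Λ x * σ x).trace ≤ ∑ x, (Λ x * D).trace :=
        Finset.sum_le_sum fun x _ => trace_mul_le_trace_mul (hΛ x) (hσD x)
    _ = D.trace := by rw [← trace_sum, ← Finset.sum_mul, hΛsum, Matrix.one_mul]

end Trace

lemma ρPlus_sub_ρMinus : ρPlus - ρMinus = !![0, 1; 1, 0] := by
  ext i j
  fin_cases i <;> fin_cases j <;> norm_num [ρPlus, ρMinus]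

lemma ρPlus_nonneg : 0 ≤ ρPlus := by
  have h : ρPlus = (1 / 2 : ℂ) • vecMulVec ![1, 1] (star ![1, 1]) := by
    ext i j
    fin_cases i <;> fin_cases j <;> simp [ρPlus, vecMulVec]
  rw [h]
  exact smul_nonneg (by positivity) (posSemidef_vecMulVec_self_star _).nonneg

lemma ρMinus_nonneg : 0 ≤ ρMinus := by
  have h : ρMinus = (1 / 2 : ℂ) • vecMulVec ![1, -1] (star ![1, -1]) := by
    ext i j
    fin_cases i <;> fin_cases j <;> simp [ρMinus, vecMulVec]
  rw [h]
  exact smul_nonneg (by positivity) (posSemidef_vecMulVec_self_star _).nonneg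

lemma ρbit_nonneg (i : Fin 2) : 0 ≤ ρbit i := by
  unfold ρbit
  split_ifs
  exacts [ρPlus_nonneg, ρMinus_nonneg]

lemma trace_ρPlus : ρPlus.trace = 1 := by
  norm_num [ρPlus, trace_fin_two]

lemma trace_ρMinus : ρMinus.trace = 1 := by
  norm_num [ρMinus, trace_fin_two]

section AmplitudeDamping

variable (γ : ℝ)

lemma ADC_sub (ρ ρ' : Matrix (Fin 2) (Fin 2) ℂ) : ADC γ (ρ - ρ') = ADC γ ρ - ADC γ ρ' := by
  simp only [ADC, Matrix.mul_sub, Matrix.sub_mul]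
  abel

lemma ADC_nonneg {ρ : Matrix (Fin 2) (Fin 2) ℂ} (hρ : 0 ≤ ρ) : 0 ≤ ADC γ ρ :=
  add_nonneg (hρ.posSemidef.mul_mul_conjTranspose_same _).nonneg
    (hρ.posSemidef.mul_mul_conjTranspose_same _).nonneg

lemma ADC_pauliX : ADC γ !![0, 1; 1, 0] = (Real.sqrt (1 - γ) : ℂ) • !![0, 1; 1, 0] := by
  ext i j
  fin_cases i <;> fin_cases j <;>
    simp [ADC, K₀, K₁, vecMul, dotProduct, conjTranspose_apply, Fin.sum_univ_two]

noncomputable def adcDominant : Matrix (Fin 2) (Fin 2) ℂ :=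
  ADC γ ρPlus + (Real.sqrt (1 - γ) : ℂ) • ρMinus

lemma ADC_ρMinus_add_smul_ρPlus :
    ADC γ ρMinus + (Real.sqrt (1 - γ) : ℂ) • ρPlus = adcDominant γ := by
  have h := ADC_sub γ ρPlus ρMinus
  rw [ρPlus_sub_ρMinus, ADC_pauliX, ← ρPlus_sub_ρMinus, smul_sub, sub_eq_sub_iff_add_eq_add] at h
  rw [adcDominant, add_comm, h]

lemma ADC_ρbit_le_adcDominant (i : Fin 2) : ADC γ (ρbit i) ≤ adcDominant γ := by
  have hs : (0 : ℂ) ≤ Real.sqrt (1 - γ) := Complex.zero_le_real.mpr (Real.sqrt_nonneg _)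
  rw [← sub_nonneg]
  fin_cases i
  · simpa [ρbit, adcDominant] using smul_nonneg hs ρMinus_nonneg
  · simpa [ρbit, ← ADC_ρMinus_add_smul_ρPlus] using smul_nonneg hs ρPlus_nonneg

variable {γ}

lemma kraus_completeness (hγ0 : 0 ≤ γ) (hγ1 : γ ≤ 1) :
    (K₀ γ)ᴴ * K₀ γ + (K₁ γ)ᴴ * K₁ γ = 1 := by
  ext i j
  have h1γ : 0 ≤ 1 - γ := sub_nonneg.mpr hγ1
  fin_cases i <;> fin_cases j <;>
    simp [K₀, K₁, Matrix.mul_apply, Fin.sum_univ_two, ← Complex.ofReal_mul, hγ0, h1γ]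

lemma trace_ADC (hγ0 : 0 ≤ γ) (hγ1 : γ ≤ 1) (ρ : Matrix (Fin 2) (Fin 2) ℂ) :
    (ADC γ ρ).trace = ρ.trace := by
  rw [ADC, trace_add, trace_mul_cycle, trace_mul_cycle (K₁ γ), ← trace_add, ← Matrix.add_mul,
    kraus_completeness hγ0 hγ1, Matrix.one_mul]

lemma trace_adcDominant (hγ0 : 0 ≤ γ) (hγ1 : γ ≤ 1) :
    (adcDominant γ).trace = 1 + Real.sqrt (1 - γ) := by
  rw [adcDominant, trace_add, trace_smul, trace_ADC hγ0 hγ1, trace_ρPlus, trace_ρMinus,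
    smul_eq_mul, mul_one]

end AmplitudeDamping

lemma σout_eq_piKronecker (γ : ℝ) (n : ℕ) (x : Fin n → Fin 2) :
    σout γ n x = piKronecker fun j => ADC γ (ρbit (x j)) :=
  rfl

theorem stmt10_general (γ : ℝ) (hγ0 : 0 ≤ γ) (hγ1 : γ ≤ 1) (n : ℕ)
    (Λ : (Fin n → Fin 2) → Matrix (Fin n → Fin 2) (Fin n → Fin 2) ℂ)
    (hΛ : ∀ x, (Λ x).PosSemidef) (hΛsum : ∑ x, Λ x = 1) :
    ((2 : ℝ) ^ n)⁻¹ * ∑ x, (Λ x * σout γ n x).trace.re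
      ≤ ((1 + Real.sqrt (1 - γ)) / 2) ^ n := by
  set D := piKronecker fun _ : Fin n => adcDominant γ
  have hσD : ∀ x, σout γ n x ≤ D := fun x => by
    rw [σout_eq_piKronecker]
    exact piKronecker_mono (fun j => ADC_nonneg γ (ρbit_nonneg _))
      (fun j => ADC_ρbit_le_adcDominant γ (x j))
  have htrD : D.trace = ((1 + Real.sqrt (1 - γ)) ^ n : ℝ) := by
    simp [D, trace_piKronecker, trace_adcDominant hγ0 hγ1]
  have hsum := sum_trace_mul_le_trace_of_le (fun x => (hΛ x).nonneg) hΛsum hσD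
  rw [htrD, Complex.le_def, Complex.re_sum, Complex.ofReal_re] at hsum
  rw [div_pow, div_eq_inv_mul]
  gcongr
  exact hsum.1

/-- uncoded transmission, converse part: for every POVM `(Λ_x)_{x∈{0,1}ⁿ}` on
`ℂ^{2ⁿ}`, the average success probability of the uncoded scheme with inputs `ρ₊, ρ₋` over `n`
uses of the ADC is at most `((1 + √(1−γ))/2)ⁿ`. -/
theorem stmt10 (γ : ℝ) (hγ0 : 0 ≤ γ) (hγ1 : γ ≤ 1) (n : ℕ) (hn : 1 ≤ n)
    (Λ : (Fin n → Fin 2) → Matrix (Fin n → Fin 2) (Fin n → Fin 2) ℂ)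
    (hΛ : ∀ x, (Λ x).PosSemidef) (hΛsum : ∑ x, Λ x = 1) :
    ((2 : ℝ) ^ n)⁻¹ * ∑ x, (Λ x * σout γ n x).trace.re
      ≤ ((1 + Real.sqrt (1 - γ)) / 2) ^ n :=
  stmt10_general γ hγ0 hγ1 n Λ hΛ hΛsum
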